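/- arXiv:2108.13167 — 2 statements merged into one kernel-verified Lean document; each statement's English description precedes it below -/
import Mathlib

section
/- Suppose ν ∈ ℝ^m and μ ∈ ℝ^n have all entries strictly positive and T_E(ν,μ) is nonempty, with CRP decomposition (I_l ∪ J_l)_{l=1,…,d} and CRP-graph relation R. Then there exist a sink l_⋆ ∈ {1,…,d} (a vertex with no outgoing R-edge: ∀ b, ¬R(l_⋆, b)) and a source l^⋆ ∈ {1,…,d} (a vertex with no incoming R-edge: ∀ a, ¬R(a, l^⋆)) such that for every i⋆ ∈ I_{l_⋆}, every j⋆ ∈ J_{l^⋆}, and every (u,v) ∈ I × J, the ERP number of T_{E∪{(i⋆,j⋆)}}(ν,μ) is at most the ERP number of T_{E∪{(u,v)}}(ν,μ). -/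
open scoped Classical

noncomputable section

variable {m n : ℕ}

/-- The transportation polytope `T_E(ν,μ)`: nonnegative `m × n` matrices with row sums `ν`,
column sums `μ`, supported on the edge set `E`. -/
def transportationPolytope (ν : Fin m → ℝ) (μ : Fin n → ℝ)
    (E : Finset (Fin m × Fin n)) : Set (Fin m → Fin n → ℝ) :=
  {x | (∀ i j, 0 ≤ x i j) ∧ (∀ i, ∑ j, x i j = ν i) ∧
    (∀ j, ∑ i, x i j = μ j) ∧ ∀ i j, (i, j) ∉ E → x i j = 0}

/-- The neighborhood `N_F(S) = {j : ∃ i ∈ S, (i,j) ∈ F}`. -/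
def nbr (F : Finset (Fin m × Fin n)) (S : Finset (Fin m)) : Finset (Fin n) :=
  Finset.univ.filter fun j => ∃ i ∈ S, (i, j) ∈ F

/-- `ν` satisfies the capacity condition for `(μ, E)`. -/
def capacityCond (ν : Fin m → ℝ) (μ : Fin n → ℝ) (E : Finset (Fin m × Fin n)) : Prop :=
  ∀ S : Finset (Fin m), ∑ i ∈ S, ν i ≤ ∑ j ∈ nbr E S, μ j

/-- The CRP condition for `(ν, μ, E)`. -/
def crpCond (ν : Fin m → ℝ) (μ : Fin n → ℝ) (E : Finset (Fin m × Fin n)) : Prop :=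
  (∑ i, ν i) = (∑ j, μ j) ∧
  ∀ S : Finset (Fin m), S.Nonempty → S ≠ Finset.univ →
    ∑ i ∈ S, ν i < ∑ j ∈ nbr E S, μ j

/-- The bipartite simple graph `G(F)` on `I ⊔ J` determined by the edge set `F`. -/
def bipartiteGraph (F : Finset (Fin m × Fin n)) : SimpleGraph (Fin m ⊕ Fin n) :=
  SimpleGraph.fromRel fun u v => ∃ i j, u = Sum.inl i ∧ v = Sum.inr j ∧ (i, j) ∈ F

/-- The number of connected components of `G(F)`. -/
def numComponents (F : Finset (Fin m × Fin n)) : ℕ :=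
  Nat.card (bipartiteGraph F).ConnectedComponent

/-- The set `E_r` of redundant edges of `T_E(ν,μ)`. -/
def redundantEdges (ν : Fin m → ℝ) (μ : Fin n → ℝ)
    (E : Finset (Fin m × Fin n)) : Finset (Fin m × Fin n) :=
  E.filter fun e => ∀ x ∈ transportationPolytope ν μ E, x e.1 e.2 = 0

/-- The ERP number of `T_E(ν,μ)`: the number of connected components of `G(E ∖ E_r)`. -/
def erpNumber (ν : Fin m → ℝ) (μ : Fin n → ℝ) (E : Finset (Fin m × Fin n)) : ℕ :=
  numComponents (E \ redundantEdges ν μ E)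

/-- The support edge set `B(x) = {(i,j) ∈ E : x_{ij} > 0}`. -/
def supportEdges (E : Finset (Fin m × Fin n)) (x : Fin m → Fin n → ℝ) :
    Finset (Fin m × Fin n) :=
  E.filter fun e => 0 < x e.1 e.2

/-- The indicator vector `𝟙_S ∈ ℝ^m` of `S ⊆ I`. -/
def indicatorVec (S : Finset (Fin m)) : Fin m → ℝ := fun i => if i ∈ S then 1 else 0

/-- `S ⊆ I` is binding if `∑_{i∈S} ν_i = ∑_{j∈N_E(S)} μ_j`. -/
def IsBinding (ν : Fin m → ℝ) (μ : Fin n → ℝ) (E : Finset (Fin m × Fin n))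
    (S : Finset (Fin m)) : Prop :=
  (∑ i ∈ S, ν i) = ∑ j ∈ nbr E S, μ j

/-- The greatest common divisor of all `m + n` components of `ν` and `μ`. -/
def gcdVec (ν : Fin m → ℕ) (μ : Fin n → ℕ) : ℕ :=
  Nat.gcd (Finset.univ.gcd ν) (Finset.univ.gcd μ)

/-- `d_⋆ = max {1, m + n − (∑ᵢ νᵢ) / gcd(ν,μ)}`. -/
def dStar (ν : Fin m → ℕ) (μ : Fin n → ℕ) : ℕ :=
  max 1 (m + n - (∑ i, ν i) / gcdVec ν μ)

/-- The CRP-gap `δ_F(ν,μ)` of the edge set `F` (computed with respect to the redundant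
edges of `T_F(ν,μ)`). -/
def crpGap (ν : Fin m → ℝ) (μ : Fin n → ℝ) (F : Finset (Fin m × Fin n)) : ℝ :=
  sInf {t : ℝ | ∃ C : Finset (Fin m),
    (∑ i ∈ C, ν i) < (∑ j ∈ nbr (F \ redundantEdges ν μ F) C, μ j) ∧
    t = (∑ j ∈ nbr F C, μ j) - ∑ i ∈ C, ν i}

/-- The CRP-graph relation `R` on the connected components of `G(E ∖ E_r)`:
`R c₁ c₂` holds iff `c₁ ≠ c₂` and some edge `(i,j) ∈ E` has `i` in the demand side of `c₁`
and `j` in the supply side of `c₂`. -/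
def crpRel (ν : Fin m → ℝ) (μ : Fin n → ℝ) (E : Finset (Fin m × Fin n)) :
    (bipartiteGraph (E \ redundantEdges ν μ E)).ConnectedComponent →
    (bipartiteGraph (E \ redundantEdges ν μ E)).ConnectedComponent → Prop :=
  fun c₁ c₂ => c₁ ≠ c₂ ∧ ∃ i j, (i, j) ∈ E ∧
    (bipartiteGraph (E \ redundantEdges ν μ E)).connectedComponentMk (Sum.inl i) = c₁ ∧
    (bipartiteGraph (E \ redundantEdges ν μ E)).connectedComponentMk (Sum.inr j) = c₂

end

/-!
Fix a point of `T_E(ν,μ)` that is positive on every nonredundant edge. For `E' ⊇ E`, an edge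
`(i,j) ∈ E'` is nonredundant for `T_{E'}(ν,μ)` exactly when, in the CRP-graph of `T_E(ν,μ)`
enlarged by the edges of `E'`, the component of `j` reaches the component of `i`. If it does, a
unit circulation around the resulting cycle can be added to that point with a small positive
weight. If it does not, the components not reachable from `j` form a union whose demand and
supply sides carry equal mass and which receives no edge from outside, so no mass leaves it.

Hence the CRP-graph is acyclic, and adding an edge `(u,v)` merges exactly the components lying on
paths from the component of `v` to that of `u`, leaving the others untouched. The ERP number is
thus minimized by an edge spanning a largest such interval of components; enlarging the interval
to run from a source to a sink keeps it largest.
-/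

open SimpleGraph Relation Function

lemma Relation.ReflTransGen.of_or_edge {α : Type*} {r : α → α → Prop} {x y a b : α}
    (h : ReflTransGen (fun c d => r c d ∨ c = x ∧ d = y) a b) :
    ReflTransGen r a b ∨ ReflTransGen r a x ∧ ReflTransGen r y b := by
  induction h with
  | refl => exact .inl .refl
  | tail _ hcd ih =>
    rcases hcd with hcd | ⟨rfl, rfl⟩
    · exact ih.imp (·.tail hcd) fun h => ⟨h.1, h.2.tail hcd⟩
    · exact .inr ⟨ih.elim id (·.1), .refl⟩

lemma Relation.exists_reflTransGen_forall_eq {α : Type*} [Finite α] {r : α → α → Prop}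
    (hr : ∀ a b, r a b → ReflTransGen r b a → a = b) (a : α) :
    ∃ b, ReflTransGen r a b ∧ ∀ c, r b c → b = c := by
  obtain ⟨b, hab, hmin⟩ := Set.exists_min_image {b | ReflTransGen r a b}
    (fun b => {c | ReflTransGen r b c}.ncard) (Set.toFinite _) ⟨a, .refl⟩
  refine ⟨b, hab, fun c hbc => by_contra fun hne => (hmin c (hab.tail hbc)).not_gt ?_⟩
  refine Set.ncard_lt_ncard ⟨fun d hd => ReflTransGen.head hbc hd, fun hsub => hne ?_⟩
  exact hr b c hbc (hsub (ReflTransGen.refl : ReflTransGen r b b))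

lemma Nat.card_add_ncard_le_of_surjective {α β : Type*} [Finite α] {f : α → β}
    (hf : Surjective f) {S : Set α} (hS : ∀ a ∈ S, ∀ b ∈ S, f a = f b) :
    Nat.card β + S.ncard ≤ Nat.card α + 1 := by
  have hcover : (Set.univ : Set β) ⊆ f '' Sᶜ ∪ f '' S := by
    rw [← Set.image_union, Set.compl_union_self, Set.image_univ_of_surjective hf]
  have himage : (f '' S).ncard ≤ 1 :=
    (Set.ncard_le_one (Set.toFinite _)).2 fun _ ⟨a, ha, hfa⟩ _ ⟨b, hb, hfb⟩ =>
      hfa ▸ hfb ▸ hS a ha b hb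
  have := Set.ncard_add_ncard_compl S
  have := (Set.ncard_le_ncard hcover).trans (Set.ncard_union_le _ _)
  have : (f '' Sᶜ).ncard ≤ Sᶜ.ncard := Set.ncard_image_le
  rw [Set.ncard_univ] at *
  omega

lemma Nat.card_add_one_le_of_subset_range {α β : Type*} [Finite α] [Finite β] {g : β → α}
    {S : Set α} {a : α} (ha : a ∈ S) (hg : insert a Sᶜ ⊆ Set.range g) :
    Nat.card α + 1 ≤ Nat.card β + S.ncard := by
  have := Set.ncard_add_ncard_compl S
  have := Set.ncard_insert_of_notMem (s := Sᶜ) (not_not_intro ha)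
  have := (Set.ncard_le_ncard hg).trans
    ((Set.image_univ (f := g) ▸ Set.ncard_image_le).trans (Set.ncard_univ β).le)
  omega

section Polytope

variable {ν : Fin m → ℝ} {μ : Fin n → ℝ} {E E' : Finset (Fin m × Fin n)}
  {x : Fin m → Fin n → ℝ}

lemma transportationPolytope_mono (h : E ⊆ E') :
    transportationPolytope ν μ E ⊆ transportationPolytope ν μ E' :=
  fun _ ⟨h0, hrow, hcol, hsupp⟩ => ⟨h0, hrow, hcol, fun i j hij => hsupp i j (hij <| h ·)⟩

lemma convex_transportationPolytope : Convex ℝ (transportationPolytope ν μ E) := by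
  rintro x ⟨hx0, hxrow, hxcol, hxsupp⟩ y ⟨hy0, hyrow, hycol, hysupp⟩ a b ha hb hab
  refine ⟨fun i j => ?_, fun i => ?_, fun j => ?_, fun i j hij => ?_⟩
  · simp only [Pi.add_apply, Pi.smul_apply, smul_eq_mul]
    have := hx0 i j; have := hy0 i j; positivity
  · simp [Finset.sum_add_distrib, ← Finset.mul_sum, hxrow, hyrow, ← add_mul, hab]
  · simp [Finset.sum_add_distrib, ← Finset.mul_sum, hxcol, hycol, ← add_mul, hab]
  · simp [hxsupp i j hij, hysupp i j hij]

lemma eq_zero_of_notMem_nonredundant (hx : x ∈ transportationPolytope ν μ E) {i j}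
    (h : (i, j) ∉ E \ redundantEdges ν μ E) : x i j = 0 := by
  by_cases hE : (i, j) ∈ E
  · have hr : (i, j) ∈ redundantEdges ν μ E := by simpa [hE] using h
    exact (Finset.mem_filter.1 hr).2 x hx
  · exact hx.2.2.2 i j hE

lemma nonredundant_mono (h : E ⊆ E') :
    E \ redundantEdges ν μ E ⊆ E' \ redundantEdges ν μ E' := by
  intro e he
  simp only [Finset.mem_sdiff, redundantEdges, Finset.mem_filter, not_and, not_forall] at he ⊢
  obtain ⟨x, hx, hxe⟩ := he.2 he.1
  exact ⟨h he.1, fun _ => ⟨x, transportationPolytope_mono h hx, hxe⟩⟩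

lemma exists_pos_of_nonredundant (hne : (transportationPolytope ν μ E).Nonempty) :
    ∃ x ∈ transportationPolytope ν μ E, ∀ e ∈ E \ redundantEdges ν μ E, 0 < x e.1 e.2 := by
  suffices ∀ S : Finset (Fin m × Fin n), S ⊆ E \ redundantEdges ν μ E →
      ∃ x ∈ transportationPolytope ν μ E, ∀ e ∈ S, 0 < x e.1 e.2 from this _ subset_rfl
  intro S
  induction S using Finset.induction_on with
  | empty => exact fun _ => ⟨hne.some, hne.some_mem, by simp⟩
  | insert e S _ ih =>
    intro hS
    obtain ⟨x, hx, hxS⟩ := ih ((Finset.subset_insert e S).trans hS)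
    have he := hS (Finset.mem_insert_self e S)
    simp only [Finset.mem_sdiff, redundantEdges, Finset.mem_filter, not_and, not_forall] at he
    obtain ⟨y, hy, hye⟩ := he.2 he.1
    have hye : 0 < y e.1 e.2 := (hy.1 e.1 e.2).lt_of_ne' hye
    refine ⟨(1 / 2 : ℝ) • x + (1 / 2 : ℝ) • y,
      convex_transportationPolytope hx hy (by norm_num) (by norm_num) (by norm_num), ?_⟩
    intro f hf
    have := hx.1 f.1 f.2; have := hy.1 f.1 f.2
    simp only [Pi.add_apply, Pi.smul_apply, smul_eq_mul]
    rcases Finset.mem_insert.1 hf with rfl | hf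
    · linarith
    · linarith [hxS f hf]

lemma exists_pos_add_smul_mem (hx : x ∈ transportationPolytope ν μ E) (hE : E ⊆ E')
    {S : Finset (Fin m × Fin n)} (hxS : ∀ e ∈ S, 0 < x e.1 e.2) {d : Fin m → Fin n → ℝ}
    (hd0 : ∀ i j, (i, j) ∉ E' → d i j = 0) (hdS : ∀ i j, (i, j) ∉ S → 0 ≤ d i j)
    (hrow : ∀ i, ∑ j, d i j = 0) (hcol : ∀ j, ∑ i, d i j = 0) :
    ∃ ε : ℝ, 0 < ε ∧ x + ε • d ∈ transportationPolytope ν μ E' := by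
  have hnear : ∀ᶠ ε in nhds (0 : ℝ), ∀ e ∈ S, 0 < x e.1 e.2 + ε * d e.1 e.2 :=
    (Filter.eventually_all_finset S).2 fun e he =>
      continuousAt_const.eventually_lt
        (continuous_const.add (continuous_id.mul continuous_const)).continuousAt
        (by simpa using hxS e he)
  have hpos : ∀ᶠ ε in nhdsWithin (0 : ℝ) (Set.Ioi 0), 0 < ε := self_mem_nhdsWithin
  obtain ⟨ε, hεS, hε⟩ := ((hnear.filter_mono nhdsWithin_le_nhds).and hpos).exists
  refine ⟨ε, hε, fun i j => ?_, fun i => ?_, fun j => ?_, fun i j hij => ?_⟩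
  · simp only [Pi.add_apply, Pi.smul_apply, smul_eq_mul]
    by_cases h : (i, j) ∈ S
    · exact (hεS _ h).le
    · have := hx.1 i j; have := hdS i j h; positivity
  · simp [Finset.sum_add_distrib, ← Finset.mul_sum, hx.2.1, hrow]
  · simp [Finset.sum_add_distrib, ← Finset.mul_sum, hx.2.2.1, hcol]
  · simp [hx.2.2.2 i j (hij <| hE ·), hd0 i j hij]

lemma sum_sub_sum_eq (hx : x ∈ transportationPolytope ν μ E) (I : Finset (Fin m))
    (J : Finset (Fin n)) :
    ∑ i ∈ I, ν i - ∑ j ∈ J, μ j = ∑ i ∈ I, ∑ j ∈ Jᶜ, x i j - ∑ j ∈ J, ∑ i ∈ Iᶜ, x i j := by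
  simp only [← hx.2.1, ← hx.2.2.1, ← Finset.sum_add_sum_compl J, ← Finset.sum_add_sum_compl I,
    Finset.sum_add_distrib, Finset.sum_comm (s := I) (t := J)]
  ring

end Polytope

section Flows

/-- Reads `y i j` as a flow from `i ∈ I` to `j ∈ J`. -/
def netOutflow : (Fin m → Fin n → ℝ) →ₗ[ℝ] (Fin m ⊕ Fin n → ℝ) where
  toFun y := Sum.elim (fun i => ∑ j, y i j) (fun j => -∑ i, y i j)
  map_add' y z := by ext (i | j) <;> simp [Finset.sum_add_distrib, add_comm]
  map_smul' c y := by ext (i | j) <;> simp [Finset.mul_sum]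

@[simp] lemma netOutflow_inl (y : Fin m → Fin n → ℝ) (i : Fin m) :
    netOutflow y (Sum.inl i) = ∑ j, y i j := rfl

@[simp] lemma netOutflow_inr (y : Fin m → Fin n → ℝ) (j : Fin n) :
    netOutflow y (Sum.inr j) = -∑ i, y i j := rfl

def unitFlow (i : Fin m) (j : Fin n) : Fin m → Fin n → ℝ :=
  fun p q => if p = i ∧ q = j then 1 else 0

lemma unitFlow_of_ne (i : Fin m) (j : Fin n) {p : Fin m} {q : Fin n}
    (h : (p, q) ≠ (i, j)) : unitFlow i j p q = 0 :=
  if_neg (by simpa using h)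

lemma netOutflow_unitFlow (i : Fin m) (j : Fin n) :
    netOutflow (unitFlow i j) = Pi.single (Sum.inl i) 1 - Pi.single (Sum.inr j) 1 := by
  ext (p | q) <;> simp [unitFlow, Pi.single_apply, ite_and, eq_comm]

lemma bipartiteGraph_adj {F : Finset (Fin m × Fin n)} {a b : Fin m ⊕ Fin n} :
    (bipartiteGraph F).Adj a b ↔ ∃ i j, (i, j) ∈ F ∧
      (a = Sum.inl i ∧ b = Sum.inr j ∨ a = Sum.inr j ∧ b = Sum.inl i) := by
  simp only [bipartiteGraph, fromRel_adj]
  aesop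

lemma SimpleGraph.Reachable.exists_bipartiteGraph_flow {F : Finset (Fin m × Fin n)}
    {z w : Fin m ⊕ Fin n} (h : (bipartiteGraph F).Reachable z w) :
    ∃ y : Fin m → Fin n → ℝ, (∀ i j, (i, j) ∉ F → y i j = 0) ∧
      netOutflow y = Pi.single z 1 - Pi.single w 1 := by
  rw [reachable_iff_reflTransGen] at h
  induction h with
  | refl => exact ⟨0, fun _ _ _ => rfl, by simp⟩
  | tail _ hadj ih =>
    obtain ⟨y, hy0, hy⟩ := ih
    obtain ⟨i, j, hij, ⟨rfl, rfl⟩ | ⟨rfl, rfl⟩⟩ := bipartiteGraph_adj.1 hadj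
    · refine ⟨y + unitFlow i j, fun p q hpq => ?_, ?_⟩
      · rw [Pi.add_apply, Pi.add_apply, hy0 p q hpq, unitFlow_of_ne i j (hpq <| · ▸ hij),
          add_zero]
      · rw [map_add, hy, netOutflow_unitFlow]; abel
    · refine ⟨y - unitFlow i j, fun p q hpq => ?_, ?_⟩
      · rw [Pi.sub_apply, Pi.sub_apply, hy0 p q hpq, unitFlow_of_ne i j (hpq <| · ▸ hij),
          sub_zero]
      · rw [map_sub, hy, netOutflow_unitFlow]; abel

end Flows

noncomputable section Components

variable (ν : Fin m → ℝ) (μ : Fin n → ℝ) (E : Finset (Fin m × Fin n))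

abbrev crpGraph : SimpleGraph (Fin m ⊕ Fin n) := bipartiteGraph (E \ redundantEdges ν μ E)

abbrev crpComponent (z : Fin m ⊕ Fin n) : (crpGraph ν μ E).ConnectedComponent :=
  (crpGraph ν μ E).connectedComponentMk z

/-- `crpRel` without the condition `c₁ ≠ c₂`, and with the edges taken from an arbitrary `E'`. -/
def crpArrow (E' : Finset (Fin m × Fin n)) (a b : (crpGraph ν μ E).ConnectedComponent) : Prop :=
  ∃ i j, (i, j) ∈ E' ∧ crpComponent ν μ E (.inl i) = a ∧ crpComponent ν μ E (.inr j) = b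

def crpInterval (a b : (crpGraph ν μ E).ConnectedComponent) :
    Set (crpGraph ν μ E).ConnectedComponent :=
  {c | ReflTransGen (crpArrow ν μ E E) a c ∧ ReflTransGen (crpArrow ν μ E E) c b}

variable {ν μ E} {E' : Finset (Fin m × Fin n)}

lemma crpComponent_eq_of_mem {i : Fin m} {j : Fin n} (h : (i, j) ∈ E \ redundantEdges ν μ E) :
    crpComponent ν μ E (.inl i) = crpComponent ν μ E (.inr j) :=
  ConnectedComponent.eq.2 (bipartiteGraph_adj.2 ⟨i, j, h, .inl ⟨rfl, rfl⟩⟩).reachable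

lemma eq_zero_of_crpArrow_closed (hne : (transportationPolytope ν μ E).Nonempty)
    {p : (crpGraph ν μ E).ConnectedComponent → Prop}
    (hp : ∀ a b, crpArrow ν μ E E' a b → p b → p a)
    {x : Fin m → Fin n → ℝ} (hx : x ∈ transportationPolytope ν μ E') {i : Fin m} {j : Fin n}
    (hi : p (crpComponent ν μ E (.inl i))) (hj : ¬ p (crpComponent ν μ E (.inr j))) :
    x i j = 0 := by
  set I := Finset.univ.filter fun i => p (crpComponent ν μ E (.inl i))
  set J := Finset.univ.filter fun j => p (crpComponent ν μ E (.inr j))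
  obtain ⟨x₀, hx₀⟩ := hne
  have hx₀IJ : ∀ i j, x₀ i j ≠ 0 → (i ∈ I ↔ j ∈ J) := fun i j h => by
    have hij := not_imp_comm.1 (eq_zero_of_notMem_nonredundant hx₀) h
    simp [I, J, crpComponent_eq_of_mem hij]
  have hbal : ∑ i ∈ I, ν i - ∑ j ∈ J, μ j = 0 := by
    rw [sum_sub_sum_eq hx₀, sub_eq_zero]
    rw [Finset.sum_eq_zero fun i hi => Finset.sum_eq_zero fun j hj => ?_,
      Finset.sum_eq_zero fun j hj => Finset.sum_eq_zero fun i hi => ?_]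
    · exact not_not.1 fun h => by simp_all [hx₀IJ i j h]
    · exact not_not.1 fun h => by simp_all [hx₀IJ i j h]
  have hin : ∑ j ∈ J, ∑ i ∈ Iᶜ, x i j = 0 :=
    Finset.sum_eq_zero fun j hj => Finset.sum_eq_zero fun i hi => not_not.1 fun h => by
      have hE' : (i, j) ∈ E' := not_not.1 (mt (hx.2.2.2 i j) h)
      simp_all [I, J, hp _ _ ⟨i, j, hE', rfl, rfl⟩]
  have hout : ∑ i ∈ I, ∑ j ∈ Jᶜ, x i j = 0 := by linarith [sum_sub_sum_eq hx I J]
  have hnonneg : ∀ i, ∀ j, 0 ≤ x i j := hx.1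
  rw [Finset.sum_eq_zero_iff_of_nonneg fun i _ => Finset.sum_nonneg fun j _ => hnonneg i j]
    at hout
  exact (Finset.sum_eq_zero_iff_of_nonneg fun j _ => hnonneg i j).1
    (hout i (by simp [I, hi])) j (by simp [J, hj])

/-- Walk inside each component of `crpGraph` and jump between components along `E'`-edges
with unit weight: the flow is nonnegative off the nonredundant edges of `E`. -/
lemma exists_flow_of_reflTransGen_crpArrow (hE : E ⊆ E') {z w : Fin m ⊕ Fin n}
    (h : ReflTransGen (crpArrow ν μ E E') (crpComponent ν μ E z) (crpComponent ν μ E w)) :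
    ∃ y : Fin m → Fin n → ℝ, (∀ i j, (i, j) ∉ E' → y i j = 0) ∧
      (∀ i j, (i, j) ∉ E \ redundantEdges ν μ E → 0 ≤ y i j) ∧
      netOutflow y = Pi.single z 1 - Pi.single w 1 := by
  have hF : E \ redundantEdges ν μ E ⊆ E' := Finset.sdiff_subset.trans hE
  generalize ha : crpComponent ν μ E z = a at h
  induction h using ReflTransGen.head_induction_on generalizing z with
  | refl =>
    obtain ⟨y, hy0, hy⟩ := (ConnectedComponent.eq.1 ha).exists_bipartiteGraph_flow
    exact ⟨y, fun i j hij => hy0 i j (hij <| hF ·), fun i j hij => (hy0 i j hij).ge, hy⟩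
  | head hac _ ih =>
    obtain ⟨p, q, hpq, hp, rfl⟩ := hac
    obtain ⟨y₁, hy₁0, hy₁F, hy₁⟩ := ih rfl
    obtain ⟨y₂, hy₂0, hy₂⟩ :=
      (ConnectedComponent.eq.1 (ha.trans hp.symm)).exists_bipartiteGraph_flow
    refine ⟨y₂ + unitFlow p q + y₁, fun i j hij => ?_, fun i j hij => ?_, ?_⟩
    · simp [hy₁0 i j hij, hy₂0 i j (hij <| hF ·), unitFlow_of_ne p q (hij <| · ▸ hpq)]
    · simp only [Pi.add_apply, hy₂0 i j hij, zero_add]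
      exact add_nonneg (by unfold unitFlow; positivity) (hy₁F i j hij)
    · rw [map_add, map_add, hy₁, hy₂, netOutflow_unitFlow]; abel

lemma mem_nonredundant_iff_reflTransGen (hE : E ⊆ E')
    (hne : (transportationPolytope ν μ E).Nonempty) {i : Fin m} {j : Fin n} (hij : (i, j) ∈ E') :
    (i, j) ∈ E' \ redundantEdges ν μ E' ↔
      ReflTransGen (crpArrow ν μ E E') (crpComponent ν μ E (.inr j))
        (crpComponent ν μ E (.inl i)) := by
  constructor
  · intro hmem
    by_contra hreach
    refine (Finset.mem_sdiff.1 hmem).2 (Finset.mem_filter.2 ⟨hij, fun x hx => ?_⟩)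
    exact eq_zero_of_crpArrow_closed hne
      (p := fun c => ¬ ReflTransGen (crpArrow ν μ E E') (crpComponent ν μ E (.inr j)) c)
      (fun a b hab hb ha => hb (ha.tail hab)) hx hreach (not_not.2 .refl)
  · intro hreach
    by_cases hF : (i, j) ∈ E \ redundantEdges ν μ E
    · exact nonredundant_mono hE hF
    obtain ⟨y, hy0, hyF, hy⟩ := exists_flow_of_reflTransGen_crpArrow hE hreach
    have hd : netOutflow (y + unitFlow i j) = 0 := by
      rw [map_add, hy, netOutflow_unitFlow]; abel
    obtain ⟨x, hx, hxF⟩ := exists_pos_of_nonredundant hne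
    obtain ⟨ε, hε, hmem⟩ := exists_pos_add_smul_mem hx hE hxF (d := y + unitFlow i j)
      (fun p q hpq => by simp [hy0 p q hpq, unitFlow_of_ne i j (hpq <| · ▸ hij)])
      (fun p q hpq => add_nonneg (hyF p q hpq) (by unfold unitFlow; positivity))
      (fun p => by simpa using congrFun hd (.inl p))
      (fun q => by simpa using congrFun hd (.inr q))
    have hpos : 0 < (x + ε • (y + unitFlow i j)) i j := by
      have := hyF i j hF
      simp only [Pi.add_apply, Pi.smul_apply, smul_eq_mul, unitFlow, and_self, if_true,
        eq_zero_of_notMem_nonredundant hx hF, zero_add]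
      positivity
    exact Finset.mem_sdiff.2 ⟨hij, fun hr => hpos.ne' ((Finset.mem_filter.1 hr).2 _ hmem)⟩

lemma eq_of_crpArrow_of_reflTransGen (hne : (transportationPolytope ν μ E).Nonempty)
    {a b : (crpGraph ν μ E).ConnectedComponent} (hab : crpArrow ν μ E E a b)
    (hba : ReflTransGen (crpArrow ν μ E E) b a) : a = b := by
  obtain ⟨i, j, hij, rfl, rfl⟩ := hab
  exact crpComponent_eq_of_mem ((mem_nonredundant_iff_reflTransGen subset_rfl hne hij).2 hba)

lemma exists_reflTransGen_crpRel_sink (hne : (transportationPolytope ν μ E).Nonempty)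
    (a : (crpGraph ν μ E).ConnectedComponent) :
    ∃ b, ReflTransGen (crpArrow ν μ E E) a b ∧ ∀ c, ¬ crpRel ν μ E b c := by
  obtain ⟨b, hab, hb⟩ := exists_reflTransGen_forall_eq
    (fun _ _ => eq_of_crpArrow_of_reflTransGen hne) a
  exact ⟨b, hab, fun c ⟨hbc, i, j, hij, hi, hj⟩ => hbc (hb c ⟨i, j, hij, hi, hj⟩)⟩

lemma exists_reflTransGen_crpRel_source (hne : (transportationPolytope ν μ E).Nonempty)
    (a : (crpGraph ν μ E).ConnectedComponent) :
    ∃ b, ReflTransGen (crpArrow ν μ E E) b a ∧ ∀ c, ¬ crpRel ν μ E c b := by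
  obtain ⟨b, hab, hb⟩ := exists_reflTransGen_forall_eq (r := swap (crpArrow ν μ E E))
    (fun _ _ h h' => (eq_of_crpArrow_of_reflTransGen hne h (reflTransGen_swap.1 h')).symm) a
  exact ⟨b, reflTransGen_swap.1 hab,
    fun c ⟨hcb, i, j, hij, hi, hj⟩ => hcb (hb c ⟨i, j, hij, hi, hj⟩).symm⟩

end Components

section AddingAnEdge

variable {ν : Fin m → ℝ} {μ : Fin n → ℝ} {E E' : Finset (Fin m × Fin n)}

lemma SimpleGraph.Reachable.bipartiteGraph_apply_eq {F : Finset (Fin m × Fin n)} {X : Type*}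
    {f : Fin m ⊕ Fin n → X} (hf : ∀ i j, (i, j) ∈ F → f (.inl i) = f (.inr j))
    {z w : Fin m ⊕ Fin n} (h : (bipartiteGraph F).Reachable z w) : f z = f w := by
  rw [reachable_iff_reflTransGen] at h
  induction h with
  | refl => rfl
  | tail _ hadj ih =>
    obtain ⟨i, j, hij, ⟨rfl, rfl⟩ | ⟨rfl, rfl⟩⟩ := bipartiteGraph_adj.1 hadj
    exacts [ih.trans (hf i j hij), ih.trans (hf i j hij).symm]

lemma crpGraph_mono (hE : E ⊆ E') : crpGraph ν μ E ≤ crpGraph ν μ E' := fun _ _ h => by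
  obtain ⟨i, j, hij, hab⟩ := bipartiteGraph_adj.1 h
  exact bipartiteGraph_adj.2 ⟨i, j, nonredundant_mono hE hij, hab⟩

lemma crpComponent_eq_of_subset (hE : E ⊆ E') {z w : Fin m ⊕ Fin n}
    (h : crpComponent ν μ E z = crpComponent ν μ E w) :
    crpComponent ν μ E' z = crpComponent ν μ E' w :=
  ConnectedComponent.eq.2 ((ConnectedComponent.eq.1 h).mono (crpGraph_mono hE))

lemma crpArrow_mono {E'' : Finset (Fin m × Fin n)} (h : E' ⊆ E'')
    {a b : (crpGraph ν μ E).ConnectedComponent} :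
    crpArrow ν μ E E' a b → crpArrow ν μ E E'' a b :=
  fun ⟨i, j, hij, hi, hj⟩ => ⟨i, j, h hij, hi, hj⟩

lemma reflTransGen_crpArrow_insert {u : Fin m} {v : Fin n}
    {a b : (crpGraph ν μ E).ConnectedComponent}
    (h : ReflTransGen (crpArrow ν μ E (insert (u, v) E)) a b) :
    ReflTransGen (crpArrow ν μ E E) a b ∨
      ReflTransGen (crpArrow ν μ E E) a (crpComponent ν μ E (.inl u)) ∧
      ReflTransGen (crpArrow ν μ E E) (crpComponent ν μ E (.inr v)) b := by
  refine (ReflTransGen.mono (fun c d ⟨i, j, hij, hi, hj⟩ => ?_) _ _ h).of_or_edge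
  rcases Finset.mem_insert.1 hij with heq | hij
  · obtain ⟨rfl, rfl⟩ := Prod.mk.inj heq
    exact .inr ⟨hi.symm, hj.symm⟩
  · exact .inl ⟨i, j, hij, hi, hj⟩

lemma crpComponent_eq_or_mem_crpInterval (hne : (transportationPolytope ν μ E).Nonempty)
    {u i : Fin m} {v j : Fin n}
    (h : (i, j) ∈ insert (u, v) E \ redundantEdges ν μ (insert (u, v) E)) :
    crpComponent ν μ E (.inl i) = crpComponent ν μ E (.inr j) ∨
      crpComponent ν μ E (.inl i) ∈ crpInterval ν μ E (crpComponent ν μ E (.inr v))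
          (crpComponent ν μ E (.inl u)) ∧
        crpComponent ν μ E (.inr j) ∈ crpInterval ν μ E (crpComponent ν μ E (.inr v))
          (crpComponent ν μ E (.inl u)) := by
  have hij := (Finset.mem_sdiff.1 h).1
  have hreach := reflTransGen_crpArrow_insert
    ((mem_nonredundant_iff_reflTransGen (Finset.subset_insert _ _) hne hij).1 h)
  rcases Finset.mem_insert.1 hij with heq | hijE
  · obtain ⟨rfl, rfl⟩ := Prod.mk.inj heq
    have hvu := hreach.elim id (·.1)
    exact .inr ⟨⟨hvu, .refl⟩, ⟨.refl, hvu⟩⟩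
  · have harrow : crpArrow ν μ E E _ _ := ⟨i, j, hijE, rfl, rfl⟩
    rcases hreach with hji | ⟨hju, hvi⟩
    · exact .inl (eq_of_crpArrow_of_reflTransGen hne harrow hji)
    · exact .inr ⟨⟨hvi, .head harrow hju⟩, ⟨hvi.tail harrow, hju⟩⟩

/-- Every edge `(p, q) ∈ E` met on a path from `crpComponent (inr j)` to `crpComponent (inl i)`
closes a cycle through the new edge `(i, j)`, hence becomes nonredundant. -/
lemma crpComponent_insert_eq (hne : (transportationPolytope ν μ E).Nonempty)
    {i : Fin m} {j : Fin n} {z : Fin m ⊕ Fin n}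
    (hz : crpComponent ν μ E z ∈ crpInterval ν μ E (crpComponent ν μ E (.inr j))
      (crpComponent ν μ E (.inl i))) :
    crpComponent ν μ (insert (i, j) E) z = crpComponent ν μ (insert (i, j) E) (.inr j) := by
  have hsub := Finset.subset_insert (i, j) E
  obtain ⟨hjc, hci⟩ := hz
  generalize hzc : crpComponent ν μ E z = c at hjc hci
  induction hjc generalizing z with
  | refl => exact crpComponent_eq_of_subset hsub hzc
  | tail hjc' hstep ih =>
    obtain ⟨p, q, hpq, hp, hq⟩ := hstep
    have hqp : ReflTransGen (crpArrow ν μ E (insert (i, j) E)) (crpComponent ν μ E (.inr q))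
        (crpComponent ν μ E (.inl p)) := by
      rw [hq, hp]
      exact (ReflTransGen.mono (fun _ _ => crpArrow_mono hsub) _ _ hci).trans
        (.head ⟨i, j, Finset.mem_insert_self _ _, rfl, rfl⟩
          (ReflTransGen.mono (fun _ _ => crpArrow_mono hsub) _ _ hjc'))
    have hpq' :=
      (mem_nonredundant_iff_reflTransGen hsub hne (Finset.mem_insert_of_mem hpq)).2 hqp
    calc crpComponent ν μ (insert (i, j) E) z
        = crpComponent ν μ (insert (i, j) E) (.inr q) :=
          crpComponent_eq_of_subset hsub (hzc.trans hq.symm)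
      _ = crpComponent ν μ (insert (i, j) E) (.inl p) := (crpComponent_eq_of_mem hpq').symm
      _ = crpComponent ν μ (insert (i, j) E) (.inr j) :=
          ih hp (.head ⟨p, q, hpq, hp, hq⟩ hci)

end AddingAnEdge

section ERPNumber

variable {ν : Fin m → ℝ} {μ : Fin n → ℝ} {E : Finset (Fin m × Fin n)}

lemma erpNumber_insert_add_ncard_le (hne : (transportationPolytope ν μ E).Nonempty)
    (i : Fin m) (j : Fin n) :
    erpNumber ν μ (insert (i, j) E) + (crpInterval ν μ E (crpComponent ν μ E (.inr j))
      (crpComponent ν μ E (.inl i))).ncard ≤ erpNumber ν μ E + 1 := by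
  refine Nat.card_add_ncard_le_of_surjective
    (ConnectedComponent.surjective_map_ofLE (crpGraph_mono (Finset.subset_insert (i, j) E)))
    fun a ha b hb => ?_
  obtain ⟨z, rfl⟩ := a.exists_rep
  obtain ⟨w, rfl⟩ := b.exists_rep
  exact (crpComponent_insert_eq hne ha).trans (crpComponent_insert_eq hne hb).symm

/-- Collapsing the interval from `crpComponent (inr v)` to `crpComponent (inl u)` to a point is
constant on the components of the enlarged graph, so these are at least as many as the
collapsed components. -/
lemma erpNumber_add_one_le_insert (hne : (transportationPolytope ν μ E).Nonempty)
    (u : Fin m) (v : Fin n) :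
    erpNumber ν μ E + 1 ≤ erpNumber ν μ (insert (u, v) E) + max 1 (crpInterval ν μ E
      (crpComponent ν μ E (.inr v)) (crpComponent ν μ E (.inl u))).ncard := by
  set I := crpInterval ν μ E (crpComponent ν μ E (.inr v)) (crpComponent ν μ E (.inl u))
  set S := insert (crpComponent ν μ E (.inr v)) I
  let collapse (c : (crpGraph ν μ E).ConnectedComponent) :
      (crpGraph ν μ E).ConnectedComponent :=
    if c ∈ S then crpComponent ν μ E (.inr v) else c
  have hcollapse : ∀ i j, (i, j) ∈ insert (u, v) E \ redundantEdges ν μ (insert (u, v) E) →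
      collapse (crpComponent ν μ E (.inl i)) = collapse (crpComponent ν μ E (.inr j)) := by
    intro i j hij
    rcases crpComponent_eq_or_mem_crpInterval hne hij with heq | ⟨hi, hj⟩
    · rw [heq]
    · exact (if_pos (Set.mem_insert_of_mem _ hi)).trans
        (if_pos (Set.mem_insert_of_mem _ hj)).symm
  let g := ConnectedComponent.lift (fun z => collapse (crpComponent ν μ E z))
    fun _ _ p _ => Reachable.bipartiteGraph_apply_eq
      (f := fun z => collapse (crpComponent ν μ E z)) hcollapse ⟨p⟩
  have hg : insert (crpComponent ν μ E (.inr v)) Sᶜ ⊆ Set.range g := by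
    rintro c hc
    obtain ⟨z, rfl⟩ := c.exists_rep
    refine ⟨crpComponent ν μ (insert (u, v) E) z, ?_⟩
    rcases hc with hc | hc
    · have hz : crpComponent ν μ E z ∈ S := by
        rw [show crpComponent ν μ E z = _ from hc]; exact Set.mem_insert _ I
      exact (if_pos hz).trans hc.symm
    · exact if_neg hc
  have hS : S.ncard ≤ max 1 I.ncard := by
    by_cases hI : I.Nonempty
    · obtain ⟨c, hc₁, hc₂⟩ := hI
      rw [show S = I from Set.insert_eq_of_mem ⟨.refl, hc₁.trans hc₂⟩]
      exact le_max_right _ _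
    · simp [S, Set.not_nonempty_iff_eq_empty.1 hI]
  exact (Nat.card_add_one_le_of_subset_range (Set.mem_insert _ I) hg).trans
    (Nat.add_le_add_left hS _)

end ERPNumber

theorem stmt_17_general {m n : ℕ} (hm : 1 ≤ m)
    (ν : Fin m → ℝ) (μ : Fin n → ℝ) (E : Finset (Fin m × Fin n))
    (hne : (transportationPolytope ν μ E).Nonempty) :
    let G := bipartiteGraph (E \ redundantEdges ν μ E)
    ∃ lsink lsource : G.ConnectedComponent,
      (∀ b, ¬ crpRel ν μ E lsink b) ∧
      (∀ a, ¬ crpRel ν μ E a lsource) ∧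
      ∀ (istar : Fin m) (jstar : Fin n),
        G.connectedComponentMk (Sum.inl istar) = lsink →
        G.connectedComponentMk (Sum.inr jstar) = lsource →
        ∀ (u : Fin m) (v : Fin n),
          erpNumber ν μ (insert (istar, jstar) E) ≤ erpNumber ν μ (insert (u, v) E) := by
  intro G
  have : Nonempty G.ConnectedComponent := ⟨G.connectedComponentMk (.inl ⟨0, hm⟩)⟩
  obtain ⟨⟨t, s⟩, hmax⟩ :=
    Finite.exists_max fun p : G.ConnectedComponent × G.ConnectedComponent =>
      (crpInterval ν μ E p.1 p.2).ncard
  obtain ⟨s', hss', hsink⟩ := exists_reflTransGen_crpRel_sink hne s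
  obtain ⟨t', ht't, hsource⟩ := exists_reflTransGen_crpRel_source hne t
  refine ⟨s', t', hsink, hsource, fun i j hi hj u v => ?_⟩
  have hupper := erpNumber_insert_add_ncard_le hne i j
  rw [show crpComponent ν μ E (.inl i) = s' from hi,
    show crpComponent ν μ E (.inr j) = t' from hj] at hupper
  have hlower := erpNumber_add_one_le_insert hne u v
  have hgrow : (crpInterval ν μ E t s).ncard ≤ (crpInterval ν μ E t' s').ncard :=
    Set.ncard_le_ncard fun c ⟨htc, hcs⟩ => ⟨ht't.trans htc, hcs.trans hss'⟩
  have htt : t ∈ crpInterval ν μ E t t := ⟨.refl, .refl⟩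
  have hpos : 1 ≤ (crpInterval ν μ E t s).ncard :=
    ((Set.ncard_pos (Set.toFinite _)).2 ⟨t, htt⟩).trans_le (hmax (t, t))
  have hvu : (crpInterval ν μ E (crpComponent ν μ E (.inr v))
      (crpComponent ν μ E (.inl u))).ncard ≤ (crpInterval ν μ E t s).ncard := hmax (_, _)
  have := max_le hpos hvu
  omega

/-- there exist a sink `l_⋆` and a source `l^⋆` of the CRP-graph such that adding
any edge from the demand side of `l_⋆` to the supply side of `l^⋆` minimizes the resulting ERP
number over all possible single added edges. -/
theorem stmt_17 {m n : ℕ} (hm : 1 ≤ m) (hn : 1 ≤ n)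
    (ν : Fin m → ℝ) (μ : Fin n → ℝ) (E : Finset (Fin m × Fin n))
    (hν : ∀ i, 0 < ν i) (hμ : ∀ j, 0 < μ j)
    (hne : (transportationPolytope ν μ E).Nonempty) :
    let G := bipartiteGraph (E \ redundantEdges ν μ E)
    ∃ lsink lsource : G.ConnectedComponent,
      (∀ b, ¬ crpRel ν μ E lsink b) ∧
      (∀ a, ¬ crpRel ν μ E a lsource) ∧
      ∀ (istar : Fin m) (jstar : Fin n),
        G.connectedComponentMk (Sum.inl istar) = lsink →
        G.connectedComponentMk (Sum.inr jstar) = lsource →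
        ∀ (u : Fin m) (v : Fin n),
          erpNumber ν μ (insert (istar, jstar) E) ≤ erpNumber ν μ (insert (u, v) E) :=
  stmt_17_general hm ν μ E hne
end

section
/- Suppose ν ∈ ℝ^m and μ ∈ ℝ^n have all entries strictly positive and T_E(ν,μ) is nonempty. Let I = I_1 ⊔ ⋯ ⊔ I_d be a partition of I into nonempty sets, and define J_0 = ∅, J_l = N_E(I_l) ∖ (J_0 ∪ ⋯ ∪ J_{l−1}) and E_l = E ∩ (I_l × J_l) for l = 1,…,d. If for every l ∈ {1,…,d} the restricted triple (ν restricted to I_l, μ restricted to J_l, E_l) satisfies the CRP condition (i.e., ∑_{i∈I_l} ν_i = ∑_{j∈J_l} μ_j and ∑_{i∈S} ν_i < ∑_{j∈N_{E_l}(S)} μ_j for every nonempty proper subset S ⊊ I_l), then the set of redundant edges of T_E(ν,μ) is exactly E_r = E ∖ (E_1 ∪ ⋯ ∪ E_d), and the connected components of the bipartite graph G(E ∖ E_r) have vertex sets exactly I_l ∪ J_l, l = 1,…,d; in particular {(I_l, J_l)}_{l=1}^d is the CRP decomposition of T_E(ν,μ). -/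
open scoped Classical

section AuxLemmas

open Finset Relation

variable {m n : ℕ}

lemma mem_nbr {F : Finset (Fin m × Fin n)} {S : Finset (Fin m)} {j : Fin n} :
    j ∈ nbr F S ↔ ∃ i ∈ S, (i, j) ∈ F := by
  simp [nbr]

/-- The augmenting-step relation: from a supply node `j` we may move to demand node `i`
if `x i j > 0` (we can decrease there), and from demand node `i` to supply node `j`
if `(i,j) ∈ F` (we may increase there). -/
def Step (x : Fin m → Fin n → ℝ) (F : Finset (Fin m × Fin n)) :
    (Fin m ⊕ Fin n) → (Fin m ⊕ Fin n) → Prop :=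
  fun a b => (∃ i j, a = Sum.inr j ∧ b = Sum.inl i ∧ 0 < x i j) ∨
             (∃ i j, a = Sum.inl i ∧ b = Sum.inr j ∧ (i, j) ∈ F)

lemma sum_ite_pair_row (i : Fin m) (j : Fin n) (ε : ℝ) (a : Fin m) :
    ∑ b, (if a = i ∧ b = j then ε else 0) = if a = i then ε else 0 := by
  by_cases h : a = i <;> simp [h]

lemma sum_ite_pair_col (i : Fin m) (j : Fin n) (ε : ℝ) (b : Fin n) :
    ∑ a, (if a = i ∧ b = j then ε else 0) = if b = j then ε else 0 := by
  by_cases h : b = j <;> simp [h]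

lemma augment {ν : Fin m → ℝ} {μ : Fin n → ℝ} {E F : Finset (Fin m × Fin n)}
    {x : Fin m → Fin n → ℝ} (hx : x ∈ transportationPolytope ν μ E) (hF : F ⊆ E)
    {j0 : Fin n} {i0 : Fin m} (hij : (i0, j0) ∈ E)
    (hreach : Relation.ReflTransGen (Step x F) (Sum.inr j0) (Sum.inl i0)) :
    ∃ x' ∈ transportationPolytope ν μ E, 0 < x' i0 j0 := by
  obtain ⟨hx0, hxr, hxc, hxs⟩ := hx
  suffices h : ∀ v, Relation.ReflTransGen (Step x F) (Sum.inr j0) v →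
      ∃ ε₀ K : ℝ, 0 < ε₀ ∧ 0 ≤ K ∧ ∀ ε : ℝ, 0 < ε → ε ≤ ε₀ →
        ∃ y : Fin m → Fin n → ℝ,
          (∀ i j, 0 ≤ y i j) ∧ (∀ i j, (i, j) ∉ E → y i j = 0) ∧
          (∀ i j, x i j - K * ε ≤ y i j) ∧
          (∀ i, ∑ j, y i j
            = ν i - ε * (Sum.elim (fun i' => if i' = i then (1:ℝ) else 0) (fun _ => 0) v)) ∧
          (∀ j, ∑ i, y i j
            = μ j - (if j = j0 then ε else 0)
              + ε * (Sum.elim (fun _ => (0:ℝ)) (fun j' => if j' = j then 1 else 0) v)) by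
    obtain ⟨ε₀, K, hε₀, hK, hinv⟩ := h _ hreach
    obtain ⟨y, hy0, hys, hylb, hyr, hyc⟩ := hinv ε₀ hε₀ le_rfl
    refine ⟨fun a b => y a b + (if a = i0 ∧ b = j0 then ε₀ else 0), ⟨?_, ?_, ?_, ?_⟩, ?_⟩
    · intro i j; dsimp only
      have := hy0 i j
      split_ifs with h <;> linarith
    · intro i
      dsimp only
      rw [Finset.sum_add_distrib, sum_ite_pair_row, hyr i]
      rcases eq_or_ne i i0 with rfl | h
      · simp only [Sum.elim_inl, if_pos rfl]; simp; try ring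
      · simp only [Sum.elim_inl, if_neg h, if_neg (Ne.symm h)]; ring
    · intro j
      dsimp only
      rw [Finset.sum_add_distrib, sum_ite_pair_col, hyc j]
      rcases eq_or_ne j j0 with rfl | h
      · simp only [Sum.elim_inl, if_pos rfl]; simp; try ring
      · simp only [Sum.elim_inl, if_neg h]; ring
    · intro i j hijE
      dsimp only
      have hne : ¬(i = i0 ∧ j = j0) := by rintro ⟨rfl, rfl⟩; exact hijE hij
      rw [if_neg hne, hys i j hijE]; ring
    · dsimp only
      have := hy0 i0 j0
      rw [if_pos ⟨rfl, rfl⟩]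
      linarith
  intro v hv
  induction hv with
  | refl =>
    refine ⟨1, 0, one_pos, le_rfl, fun ε hε hε1 => ⟨x, hx0, hxs, ?_, ?_, ?_⟩⟩
    · intro i j; simp
    · intro i; simp [hxr i]
    · intro j
      rw [hxc j]
      rcases eq_or_ne j j0 with rfl | h
      · simp; try ring
      · simp only [Sum.elim_inr, if_neg h, if_neg (Ne.symm h)]; ring
  | @tail b c hab hbc ih =>
    obtain ⟨ε₀, K, hε₀, hK, hinv⟩ := ih
    rcases hbc with ⟨i, j, hb, hc, hxij⟩ | ⟨i, j, hb, hc, hijF⟩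
    · -- subtract step: b = inr j, c = inl i, 0 < x i j
      subst hb; subst hc
      have hKpos : (0:ℝ) < K + 1 := by linarith
      refine ⟨min ε₀ (x i j / (K + 1)), K + 1, lt_min hε₀ (div_pos hxij hKpos), by linarith,
        fun ε hε hεle => ?_⟩
      obtain ⟨y, hy0, hys, hylb, hyr, hyc⟩ :=
        hinv ε hε (le_trans hεle (min_le_left _ _))
      have hεx : (K + 1) * ε ≤ x i j := by
        have h1 : ε ≤ x i j / (K + 1) := le_trans hεle (min_le_right _ _)
        rw [le_div_iff₀ hKpos] at h1; linarith
      have hyij : ε ≤ y i j := by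
        have := hylb i j; linarith
      refine ⟨fun a b => y a b - (if a = i ∧ b = j then ε else 0), ?_, ?_, ?_, ?_, ?_⟩
      · intro a b
        dsimp only
        have h1 := hy0 a b
        split_ifs with h
        · obtain ⟨rfl, rfl⟩ := h; linarith
        · linarith
      · intro a b hE
        dsimp only
        have hne : ¬(a = i ∧ b = j) := by
          rintro ⟨rfl, rfl⟩
          exact absurd (hxs a b (by exact hE)) (by linarith)
        rw [if_neg hne, hys a b hE]; ring
      · intro a b
        dsimp only
        have h1 := hylb a b
        split_ifs with h <;> linarith
      · intro a
        dsimp only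
        rw [Finset.sum_sub_distrib, sum_ite_pair_row, hyr a]
        rcases eq_or_ne a i with rfl | h
        · simp only [Sum.elim_inl, Sum.elim_inr, if_pos rfl]; simp; try ring
        · simp only [Sum.elim_inl, Sum.elim_inr, if_neg h, if_neg (Ne.symm h)]; ring
      · intro b
        dsimp only
        rw [Finset.sum_sub_distrib, sum_ite_pair_col, hyc b]
        rcases eq_or_ne b j with rfl | h
        · simp only [Sum.elim_inl, Sum.elim_inr, if_pos rfl]; simp; try ring
        · simp only [Sum.elim_inl, Sum.elim_inr, if_neg h, if_neg (Ne.symm h)]; ring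
    · -- add step: b = inl i, c = inr j, (i,j) ∈ F
      subst hb; subst hc
      refine ⟨ε₀, K, hε₀, hK, fun ε hε hεle => ?_⟩
      obtain ⟨y, hy0, hys, hylb, hyr, hyc⟩ := hinv ε hε hεle
      refine ⟨fun a b => y a b + (if a = i ∧ b = j then ε else 0), ?_, ?_, ?_, ?_, ?_⟩
      · intro a b
        dsimp only
        have h1 := hy0 a b
        split_ifs with h <;> linarith
      · intro a b hE
        dsimp only
        have hne : ¬(a = i ∧ b = j) := by rintro ⟨rfl, rfl⟩; exact hE (hF hijF)
        rw [if_neg hne, hys a b hE]; ring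
      · intro a b
        dsimp only
        have h1 := hylb a b
        split_ifs with h <;> linarith
      · intro a
        dsimp only
        rw [Finset.sum_add_distrib, sum_ite_pair_row, hyr a]
        rcases eq_or_ne a i with rfl | h
        · simp only [Sum.elim_inl, Sum.elim_inr, if_pos rfl]; simp; try ring
        · simp only [Sum.elim_inl, Sum.elim_inr, if_neg h, if_neg (Ne.symm h)]; ring
      · intro b
        dsimp only
        rw [Finset.sum_add_distrib, sum_ite_pair_col, hyc b]
        rcases eq_or_ne b j with rfl | h
        · simp only [Sum.elim_inl, Sum.elim_inr, if_pos rfl]; simp; try ring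
        · simp only [Sum.elim_inl, Sum.elim_inr, if_neg h, if_neg (Ne.symm h)]; ring

end AuxLemmas

section Blocks

open Finset

variable {m n d : ℕ} {ν : Fin m → ℝ} {μ : Fin n → ℝ} {E : Finset (Fin m × Fin n)}
  {P : Fin d → Finset (Fin m)} {Q : Fin d → Finset (Fin n)}
  {El : Fin d → Finset (Fin m × Fin n)}

lemma Q_disjoint_lt (hQ : ∀ l, Q l = nbr E (P l) \ (Finset.univ.filter (· < l)).biUnion Q)
    {k l : Fin d} (h : k < l) : Disjoint (Q k) (Q l) := by
  rw [Finset.disjoint_right]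
  intro j hjl hjk
  rw [hQ l, Finset.mem_sdiff] at hjl
  exact hjl.2 (Finset.mem_biUnion.mpr ⟨k, by simp [h], hjk⟩)

lemma Q_disjoint (hQ : ∀ l, Q l = nbr E (P l) \ (Finset.univ.filter (· < l)).biUnion Q)
    {k l : Fin d} (hkl : k ≠ l) : Disjoint (Q k) (Q l) := by
  rcases hkl.lt_or_gt with h | h
  · exact Q_disjoint_lt hQ h
  · exact (Q_disjoint_lt hQ h).symm

lemma edge_Q (hQ : ∀ l, Q l = nbr E (P l) \ (Finset.univ.filter (· < l)).biUnion Q)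
    {i : Fin m} {j : Fin n} {l : Fin d} (hij : (i, j) ∈ E) (hi : i ∈ P l) :
    ∃ k, k ≤ l ∧ j ∈ Q k := by
  by_cases h : j ∈ (Finset.univ.filter (· < l)).biUnion Q
  · obtain ⟨k, hk, hjk⟩ := Finset.mem_biUnion.mp h
    simp only [Finset.mem_filter, Finset.mem_univ, true_and] at hk
    exact ⟨k, hk.le, hjk⟩
  · exact ⟨l, le_rfl, by
      rw [hQ l]
      exact Finset.mem_sdiff.mpr ⟨mem_nbr.mpr ⟨i, hi, hij⟩, h⟩⟩

lemma P_unique (hPdisj : ∀ l₁ l₂, l₁ ≠ l₂ → Disjoint (P l₁) (P l₂)) {i : Fin m} {k l : Fin d}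
    (hk : i ∈ P k) (hl : i ∈ P l) : k = l := by
  by_contra h
  exact Finset.disjoint_left.mp (hPdisj k l h) hk hl

lemma Q_unique (hQ : ∀ l, Q l = nbr E (P l) \ (Finset.univ.filter (· < l)).biUnion Q)
    {j : Fin n} {k l : Fin d} (hk : j ∈ Q k) (hl : j ∈ Q l) : k = l := by
  by_contra h
  exact Finset.disjoint_left.mp (Q_disjoint hQ h) hk hl

lemma prefix_vanish (hPdisj : ∀ l₁ l₂, l₁ ≠ l₂ → Disjoint (P l₁) (P l₂))
    (hQ : ∀ l, Q l = nbr E (P l) \ (Finset.univ.filter (· < l)).biUnion Q)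
    (hCRPsum : ∀ l, (∑ i ∈ P l, ν i) = (∑ j ∈ Q l, μ j))
    {x : Fin m → Fin n → ℝ} (hx : x ∈ transportationPolytope ν μ E) (l : Fin d) :
    ∀ j ∈ (Finset.univ.filter (· ≤ l)).biUnion Q, ∀ i,
      i ∉ (Finset.univ.filter (· ≤ l)).biUnion P → x i j = 0 := by
  obtain ⟨hx0, hxr, hxc, hxs⟩ := hx
  set U := (Finset.univ.filter (· ≤ l)).biUnion P with hU
  set V := (Finset.univ.filter (· ≤ l)).biUnion Q with hV
  have hUV : ∀ i ∈ U, ∀ j, j ∉ V → x i j = 0 := by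
    intro i hi j hj
    by_cases hE : (i, j) ∈ E
    · exfalso
      obtain ⟨k, hk, hik⟩ := Finset.mem_biUnion.mp hi
      simp only [Finset.mem_filter, Finset.mem_univ, true_and] at hk
      obtain ⟨k', hk', hjk⟩ := edge_Q hQ hE hik
      exact hj (Finset.mem_biUnion.mpr ⟨k',
        by simp only [Finset.mem_filter, Finset.mem_univ, true_and]; exact hk'.trans hk, hjk⟩)
    · exact hxs i j hE
  have hsum : ∑ i ∈ U, ν i = ∑ j ∈ V, μ j := by
    rw [hU, hV, Finset.sum_biUnion (fun a _ b _ hab => hPdisj a b hab),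
      Finset.sum_biUnion (fun a _ b _ hab => Q_disjoint hQ hab)]
    exact Finset.sum_congr rfl fun k _ => hCRPsum k
  have key : ∑ j ∈ V, (μ j - ∑ i ∈ U, x i j) = 0 := by
    have h1 : ∑ i ∈ U, ν i = ∑ j ∈ V, ∑ i ∈ U, x i j := by
      calc ∑ i ∈ U, ν i = ∑ i ∈ U, ∑ j, x i j := Finset.sum_congr rfl fun i _ => (hxr i).symm
        _ = ∑ i ∈ U, ∑ j ∈ V, x i j := by
            refine Finset.sum_congr rfl fun i hi => ?_
            exact (Finset.sum_subset (Finset.subset_univ V) fun j _ hj => hUV i hi j hj).symm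
        _ = ∑ j ∈ V, ∑ i ∈ U, x i j := Finset.sum_comm
    rw [Finset.sum_sub_distrib, ← h1, hsum, sub_self]
  have hterm : ∀ j ∈ V, μ j - ∑ i ∈ U, x i j = 0 := by
    intro j hj
    refine (Finset.sum_eq_zero_iff_of_nonneg ?_).mp key j hj
    intro j' _
    have h2 : ∑ i ∈ U, x i j' ≤ ∑ i, x i j' :=
      Finset.sum_le_sum_of_subset_of_nonneg (Finset.subset_univ U) fun i _ _ => hx0 i j'
    rw [hxc j'] at h2
    linarith
  intro j hj i hiU
  have h2 : ∑ i ∈ Finset.univ \ U, x i j = 0 := by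
    have h3 := Finset.sum_sdiff (Finset.subset_univ U) (f := fun i => x i j)
    have h4 := hterm j hj
    rw [hxc j] at h3
    linarith
  exact (Finset.sum_eq_zero_iff_of_nonneg fun i' _ => hx0 i' j).mp h2 i
    (Finset.mem_sdiff.mpr ⟨Finset.mem_univ i, hiU⟩)

lemma support_block (hPdisj : ∀ l₁ l₂, l₁ ≠ l₂ → Disjoint (P l₁) (P l₂))
    (hPcov : Finset.univ.biUnion P = Finset.univ)
    (hQ : ∀ l, Q l = nbr E (P l) \ (Finset.univ.filter (· < l)).biUnion Q)
    (hCRPsum : ∀ l, (∑ i ∈ P l, ν i) = (∑ j ∈ Q l, μ j))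
    {x : Fin m → Fin n → ℝ} (hx : x ∈ transportationPolytope ν μ E) {i : Fin m} {j : Fin n}
    (hxij : 0 < x i j) : ∃ l, i ∈ P l ∧ j ∈ Q l ∧ (i, j) ∈ E := by
  have hE : (i, j) ∈ E := by
    by_contra h
    rw [hx.2.2.2 i j h] at hxij
    exact lt_irrefl _ hxij
  have hi : i ∈ Finset.univ.biUnion P := by rw [hPcov]; exact Finset.mem_univ i
  obtain ⟨l, -, hil⟩ := Finset.mem_biUnion.mp hi
  obtain ⟨k, hkl, hjk⟩ := edge_Q hQ hE hil
  rcases eq_or_lt_of_le hkl with rfl | hlt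
  · exact ⟨k, hil, hjk, hE⟩
  · exfalso
    have hjV : j ∈ (Finset.univ.filter (· ≤ k)).biUnion Q :=
      Finset.mem_biUnion.mpr ⟨k, by simp, hjk⟩
    have hiU : i ∉ (Finset.univ.filter (· ≤ k)).biUnion P := by
      intro hmem
      obtain ⟨k', hk', hik'⟩ := Finset.mem_biUnion.mp hmem
      simp only [Finset.mem_filter, Finset.mem_univ, true_and] at hk'
      have : k' = l := P_unique hPdisj hik' hil
      subst this
      exact absurd hlt (not_lt.mpr hk')
    exact absurd (prefix_vanish hPdisj hQ hCRPsum hx k j hjV i hiU) (ne_of_gt hxij)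

lemma cut_bound {x : Fin m → Fin n → ℝ} (hx : x ∈ transportationPolytope ν μ E)
    {S : Finset (Fin m)} {T' : Finset (Fin n)}
    (hclosed : ∀ j ∈ T', ∀ i, 0 < x i j → i ∈ S) :
    ∑ j ∈ T', μ j ≤ ∑ i ∈ S, ν i := by
  obtain ⟨hx0, hxr, hxc, hxs⟩ := hx
  have h1 : ∀ j ∈ T', μ j = ∑ i ∈ S, x i j := by
    intro j hj
    rw [← hxc j]
    refine (Finset.sum_subset (Finset.subset_univ S) fun i _ hiS => ?_).symm
    by_contra hne
    exact hiS (hclosed j hj i (lt_of_le_of_ne (hx0 i j) (Ne.symm hne)))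
  calc ∑ j ∈ T', μ j = ∑ j ∈ T', ∑ i ∈ S, x i j := Finset.sum_congr rfl h1
    _ = ∑ i ∈ S, ∑ j ∈ T', x i j := Finset.sum_comm
    _ ≤ ∑ i ∈ S, ∑ j, x i j := Finset.sum_le_sum fun i _ =>
        Finset.sum_le_sum_of_subset_of_nonneg (Finset.subset_univ _) fun j _ _ => hx0 i j
    _ = ∑ i ∈ S, ν i := Finset.sum_congr rfl fun i _ => hxr i

end Blocks

section Graphs

open Finset

variable {m n d : ℕ} {ν : Fin m → ℝ} {μ : Fin n → ℝ} {E : Finset (Fin m × Fin n)}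
  {P : Fin d → Finset (Fin m)} {Q : Fin d → Finset (Fin n)}
  {El : Fin d → Finset (Fin m × Fin n)}

lemma bip_adj {B : Finset (Fin m × Fin n)} {a b : Fin m ⊕ Fin n} :
    (bipartiteGraph B).Adj a b ↔
      ∃ i j, (i, j) ∈ B ∧ ((a = Sum.inl i ∧ b = Sum.inr j) ∨ (a = Sum.inr j ∧ b = Sum.inl i)) := by
  rw [bipartiteGraph, SimpleGraph.fromRel_adj]
  constructor
  · rintro ⟨hne, ⟨i, j, rfl, rfl, h⟩ | ⟨i, j, rfl, rfl, h⟩⟩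
    · exact ⟨i, j, h, Or.inl ⟨rfl, rfl⟩⟩
    · exact ⟨i, j, h, Or.inr ⟨rfl, rfl⟩⟩
  · rintro ⟨i, j, h, ⟨rfl, rfl⟩ | ⟨rfl, rfl⟩⟩
    · exact ⟨by simp, Or.inl ⟨i, j, rfl, rfl, h⟩⟩
    · exact ⟨by simp, Or.inr ⟨i, j, rfl, rfl, h⟩⟩

lemma reach_in_block (hPdisj : ∀ l₁ l₂, l₁ ≠ l₂ → Disjoint (P l₁) (P l₂))
    (hPcov : Finset.univ.biUnion P = Finset.univ)
    (hQ : ∀ l, Q l = nbr E (P l) \ (Finset.univ.filter (· < l)).biUnion Q)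
    (hEl : ∀ l, El l = E.filter fun e => e.1 ∈ P l ∧ e.2 ∈ Q l)
    (hCRPsum : ∀ l, (∑ i ∈ P l, ν i) = (∑ j ∈ Q l, μ j))
    {x : Fin m → Fin n → ℝ} (hx : x ∈ transportationPolytope ν μ E) {l : Fin d} {j0 : Fin n}
    (hj0 : j0 ∈ Q l) :
    ∀ v, Relation.ReflTransGen (Step x (El l)) (Sum.inr j0) v →
      Sum.elim (fun i => i ∈ P l) (fun j => j ∈ Q l) v := by
  intro v hv
  induction hv with
  | refl => simpa using hj0
  | @tail b c hab hbc ih =>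
    rcases hbc with ⟨i, j, hb, hc, hxij⟩ | ⟨i, j, hb, hc, hijF⟩
    · subst hb; subst hc
      obtain ⟨k, hik, hjk, hE⟩ := support_block hPdisj hPcov hQ hCRPsum hx hxij
      have hkl : k = l := Q_unique hQ hjk (by simpa using ih)
      subst hkl
      simpa using hik
    · subst hb; subst hc
      rw [hEl l] at hijF
      simpa using (Finset.mem_filter.mp hijF).2.2

lemma reach_i0 (hμ : ∀ j, 0 < μ j)
    (hPdisj : ∀ l₁ l₂, l₁ ≠ l₂ → Disjoint (P l₁) (P l₂))
    (hPcov : Finset.univ.biUnion P = Finset.univ)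
    (hQ : ∀ l, Q l = nbr E (P l) \ (Finset.univ.filter (· < l)).biUnion Q)
    (hEl : ∀ l, El l = E.filter fun e => e.1 ∈ P l ∧ e.2 ∈ Q l)
    (hCRP : ∀ l, (∑ i ∈ P l, ν i) = (∑ j ∈ Q l, μ j) ∧
      ∀ S : Finset (Fin m), S ⊆ P l → S.Nonempty → S ≠ P l →
        (∑ i ∈ S, ν i) < ∑ j ∈ nbr (El l) S, μ j)
    {x : Fin m → Fin n → ℝ} (hx : x ∈ transportationPolytope ν μ E)
    {l : Fin d} {i0 : Fin m} {j0 : Fin n} (h0 : (i0, j0) ∈ El l) :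
    Relation.ReflTransGen (Step x (El l)) (Sum.inr j0) (Sum.inl i0) := by
  have hCRPsum : ∀ l, (∑ i ∈ P l, ν i) = (∑ j ∈ Q l, μ j) := fun l => (hCRP l).1
  by_contra hcon
  have hi0P : i0 ∈ P l := by rw [hEl l] at h0; exact (Finset.mem_filter.mp h0).2.1
  have hj0Q : j0 ∈ Q l := by rw [hEl l] at h0; exact (Finset.mem_filter.mp h0).2.2
  set S : Finset (Fin m) :=
    Finset.univ.filter (fun i => Relation.ReflTransGen (Step x (El l)) (Sum.inr j0) (Sum.inl i))
    with hSdef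
  set T' : Finset (Fin n) :=
    Finset.univ.filter (fun j => Relation.ReflTransGen (Step x (El l)) (Sum.inr j0) (Sum.inr j))
    with hTdef
  have hSP : S ⊆ P l := by
    intro i hi
    have := reach_in_block hPdisj hPcov hQ hEl hCRPsum hx hj0Q (Sum.inl i)
      (Finset.mem_filter.mp hi).2
    simpa using this
  have hclosed : ∀ j ∈ T', ∀ i, 0 < x i j → i ∈ S := by
    intro j hj i hxij
    exact Finset.mem_filter.mpr ⟨Finset.mem_univ _,
      ((Finset.mem_filter.mp hj).2).tail (Or.inl ⟨i, j, rfl, rfl, hxij⟩)⟩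
  have hj0T : j0 ∈ T' := Finset.mem_filter.mpr ⟨Finset.mem_univ _, Relation.ReflTransGen.refl⟩
  have hSne : S.Nonempty := by
    by_contra hS0
    rw [Finset.not_nonempty_iff_eq_empty] at hS0
    have hzero : ∀ i, x i j0 = 0 := by
      intro i
      rcases (hx.1 i j0).eq_or_lt with h | h
      · exact h.symm
      · have := hclosed j0 hj0T i h
        rw [hS0] at this
        exact absurd this (Finset.notMem_empty i)
    have := hx.2.2.1 j0
    rw [Finset.sum_eq_zero fun i _ => hzero i] at this
    exact absurd this.symm (hμ j0).ne'
  have hSneq : S ≠ P l := by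
    intro h
    exact hcon (Finset.mem_filter.mp (h ▸ hi0P : i0 ∈ S)).2
  have hhall := (hCRP l).2 S hSP hSne hSneq
  have hnbr : nbr (El l) S ⊆ T' := by
    intro j hj
    obtain ⟨i, hiS, hij⟩ := mem_nbr.mp hj
    exact Finset.mem_filter.mpr ⟨Finset.mem_univ _,
      ((Finset.mem_filter.mp hiS).2).tail (Or.inr ⟨i, j, rfl, rfl, hij⟩)⟩
  have h2 : ∑ j ∈ nbr (El l) S, μ j ≤ ∑ j ∈ T', μ j :=
    Finset.sum_le_sum_of_subset_of_nonneg hnbr fun j _ _ => (hμ j).le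
  have h3 := cut_bound hx hclosed
  linarith

lemma nonredundant (hμ : ∀ j, 0 < μ j)
    (hPdisj : ∀ l₁ l₂, l₁ ≠ l₂ → Disjoint (P l₁) (P l₂))
    (hPcov : Finset.univ.biUnion P = Finset.univ)
    (hQ : ∀ l, Q l = nbr E (P l) \ (Finset.univ.filter (· < l)).biUnion Q)
    (hEl : ∀ l, El l = E.filter fun e => e.1 ∈ P l ∧ e.2 ∈ Q l)
    (hCRP : ∀ l, (∑ i ∈ P l, ν i) = (∑ j ∈ Q l, μ j) ∧
      ∀ S : Finset (Fin m), S ⊆ P l → S.Nonempty → S ≠ P l →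
        (∑ i ∈ S, ν i) < ∑ j ∈ nbr (El l) S, μ j)
    {x : Fin m → Fin n → ℝ} (hx : x ∈ transportationPolytope ν μ E)
    {l : Fin d} {i0 : Fin m} {j0 : Fin n} (h0 : (i0, j0) ∈ El l) :
    ∃ x' ∈ transportationPolytope ν μ E, 0 < x' i0 j0 := by
  have hEsub : El l ⊆ E := by rw [hEl l]; exact Finset.filter_subset _ _
  exact augment hx hEsub (hEsub h0)
    (reach_i0 hμ hPdisj hPcov hQ hEl hCRP hx h0)

lemma adj_block (hPdisj : ∀ l₁ l₂, l₁ ≠ l₂ → Disjoint (P l₁) (P l₂))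
    (hQ : ∀ l, Q l = nbr E (P l) \ (Finset.univ.filter (· < l)).biUnion Q)
    (hEl : ∀ l, El l = E.filter fun e => e.1 ∈ P l ∧ e.2 ∈ Q l)
    {a b : Fin m ⊕ Fin n} (hadj : (bipartiteGraph (Finset.univ.biUnion El)).Adj a b)
    {l : Fin d} (ha : Sum.elim (fun i => i ∈ P l) (fun j => j ∈ Q l) a) :
    Sum.elim (fun i => i ∈ P l) (fun j => j ∈ Q l) b := by
  obtain ⟨i, j, hij, hcase⟩ := bip_adj.mp hadj
  obtain ⟨k, -, hk⟩ := Finset.mem_biUnion.mp hij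
  rw [hEl k] at hk
  obtain ⟨hE, hiP, hjQ⟩ := Finset.mem_filter.mp hk
  rcases hcase with ⟨rfl, rfl⟩ | ⟨rfl, rfl⟩
  · have hkl : k = l := P_unique hPdisj hiP (by simpa using ha)
    subst hkl
    simpa using hjQ
  · have hkl : k = l := Q_unique hQ hjQ (by simpa using ha)
    subst hkl
    simpa using hiP

lemma reachable_block (hPdisj : ∀ l₁ l₂, l₁ ≠ l₂ → Disjoint (P l₁) (P l₂))
    (hQ : ∀ l, Q l = nbr E (P l) \ (Finset.univ.filter (· < l)).biUnion Q)
    (hEl : ∀ l, El l = E.filter fun e => e.1 ∈ P l ∧ e.2 ∈ Q l)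
    {u v : Fin m ⊕ Fin n} (h : (bipartiteGraph (Finset.univ.biUnion El)).Reachable u v)
    {l : Fin d} (hu : Sum.elim (fun i => i ∈ P l) (fun j => j ∈ Q l) u) :
    Sum.elim (fun i => i ∈ P l) (fun j => j ∈ Q l) v := by
  obtain ⟨w⟩ := h
  induction w with
  | nil => exact hu
  | cons hadj p ih => exact ih (adj_block hPdisj hQ hEl hadj hu)

lemma block_connected (hμ : ∀ j, 0 < μ j)
    (hPdisj : ∀ l₁ l₂, l₁ ≠ l₂ → Disjoint (P l₁) (P l₂))
    (hPcov : Finset.univ.biUnion P = Finset.univ)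
    (hQ : ∀ l, Q l = nbr E (P l) \ (Finset.univ.filter (· < l)).biUnion Q)
    (hEl : ∀ l, El l = E.filter fun e => e.1 ∈ P l ∧ e.2 ∈ Q l)
    (hCRP : ∀ l, (∑ i ∈ P l, ν i) = (∑ j ∈ Q l, μ j) ∧
      ∀ S : Finset (Fin m), S ⊆ P l → S.Nonempty → S ≠ P l →
        (∑ i ∈ S, ν i) < ∑ j ∈ nbr (El l) S, μ j)
    {x : Fin m → Fin n → ℝ} (hx : x ∈ transportationPolytope ν μ E)
    {l : Fin d} {i₀ : Fin m} (hi₀ : i₀ ∈ P l) :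
    ∀ v, Sum.elim (fun i => i ∈ P l) (fun j => j ∈ Q l) v →
      (bipartiteGraph (Finset.univ.biUnion El)).Reachable (Sum.inl i₀) v := by
  have hCRPsum : ∀ l, (∑ i ∈ P l, ν i) = (∑ j ∈ Q l, μ j) := fun l => (hCRP l).1
  set G := bipartiteGraph (Finset.univ.biUnion El) with hG
  have hadjE : ∀ {i : Fin m} {j : Fin n}, (i, j) ∈ El l → G.Adj (Sum.inl i) (Sum.inr j) := by
    intro i j hij
    exact bip_adj.mpr ⟨i, j, Finset.mem_biUnion.mpr ⟨l, Finset.mem_univ l, hij⟩,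
      Or.inl ⟨rfl, rfl⟩⟩
  set S : Finset (Fin m) :=
    (P l).filter (fun i => G.Reachable (Sum.inl i₀) (Sum.inl i)) with hSdef
  set T' : Finset (Fin n) :=
    (Q l).filter (fun j => G.Reachable (Sum.inl i₀) (Sum.inr j)) with hTdef
  have hclosed : ∀ j ∈ T', ∀ i, 0 < x i j → i ∈ S := by
    intro j hj i hxij
    obtain ⟨k, hiP, hjQ, hE⟩ := support_block hPdisj hPcov hQ hCRPsum hx hxij
    have hkl : k = l := Q_unique hQ hjQ (Finset.mem_filter.mp hj).1
    subst hkl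
    have hel : (i, j) ∈ El k := by
      rw [hEl k]; exact Finset.mem_filter.mpr ⟨hE, hiP, hjQ⟩
    exact Finset.mem_filter.mpr ⟨hiP,
      ((Finset.mem_filter.mp hj).2).trans (hadjE hel).symm.reachable⟩
  have hnbr : nbr (El l) S ⊆ T' := by
    intro j hj
    obtain ⟨i, hiS, hij⟩ := mem_nbr.mp hj
    have hjQ : j ∈ Q l := by rw [hEl l] at hij; exact (Finset.mem_filter.mp hij).2.2
    exact Finset.mem_filter.mpr ⟨hjQ,
      ((Finset.mem_filter.mp hiS).2).trans (hadjE hij).reachable⟩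
  have hSP : S ⊆ P l := Finset.filter_subset _ _
  have hSne : S.Nonempty := ⟨i₀, Finset.mem_filter.mpr ⟨hi₀, SimpleGraph.Reachable.refl _⟩⟩
  have hSeq : S = P l := by
    by_contra hneq
    have hhall := (hCRP l).2 S hSP hSne hneq
    have h2 : ∑ j ∈ nbr (El l) S, μ j ≤ ∑ j ∈ T', μ j :=
      Finset.sum_le_sum_of_subset_of_nonneg hnbr fun j _ _ => (hμ j).le
    have h3 := cut_bound hx hclosed
    linarith
  intro v hv
  cases v with
  | inl i =>
    have hiS : i ∈ S := hSeq ▸ (by simpa using hv)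
    exact (Finset.mem_filter.mp hiS).2
  | inr j =>
    have hjQ : j ∈ Q l := by simpa using hv
    have hjn : j ∈ nbr E (P l) := by
      rw [hQ l] at hjQ
      exact (Finset.mem_sdiff.mp hjQ).1
    obtain ⟨i, hiP, hij⟩ := mem_nbr.mp hjn
    have hel : (i, j) ∈ El l := by
      rw [hEl l]; exact Finset.mem_filter.mpr ⟨hij, hiP, hjQ⟩
    have hiS : i ∈ S := hSeq ▸ hiP
    exact ((Finset.mem_filter.mp hiS).2).trans (hadjE hel).reachable

end Graphs

/-- a sequential decomposition into CRP-satisfying blocks is the CRP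
decomposition: the redundant edges are exactly `E ∖ (E₁ ∪ ⋯ ∪ E_d)`, and the connected
components of `G(E ∖ E_r)` have vertex sets exactly `I_l ∪ J_l`. -/
theorem stmt_18 {m n : ℕ} (hm : 1 ≤ m) (hn : 1 ≤ n)
    (ν : Fin m → ℝ) (μ : Fin n → ℝ) (E : Finset (Fin m × Fin n))
    (hν : ∀ i, 0 < ν i) (hμ : ∀ j, 0 < μ j)
    (hne : (transportationPolytope ν μ E).Nonempty)
    (d : ℕ) (hd : 1 ≤ d)
    (P : Fin d → Finset (Fin m))
    (hPne : ∀ l, (P l).Nonempty)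
    (hPdisj : ∀ l₁ l₂, l₁ ≠ l₂ → Disjoint (P l₁) (P l₂))
    (hPcov : Finset.univ.biUnion P = Finset.univ)
    (Q : Fin d → Finset (Fin n))
    (hQ : ∀ l, Q l = nbr E (P l) \ (Finset.univ.filter (· < l)).biUnion Q)
    (El : Fin d → Finset (Fin m × Fin n))
    (hEl : ∀ l, El l = E.filter fun e => e.1 ∈ P l ∧ e.2 ∈ Q l)
    (hCRP : ∀ l, (∑ i ∈ P l, ν i) = (∑ j ∈ Q l, μ j) ∧
      ∀ S : Finset (Fin m), S ⊆ P l → S.Nonempty → S ≠ P l →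
        (∑ i ∈ S, ν i) < ∑ j ∈ nbr (El l) S, μ j) :
    redundantEdges ν μ E = E \ Finset.univ.biUnion El ∧
    ∀ u v : Fin m ⊕ Fin n,
      (bipartiteGraph (E \ redundantEdges ν μ E)).Reachable u v ↔
        ∃ l, Sum.elim (fun i => i ∈ P l) (fun j => j ∈ Q l) u ∧
             Sum.elim (fun i => i ∈ P l) (fun j => j ∈ Q l) v := by
  classical
  obtain ⟨x, hx⟩ := hne
  have hCRPsum : ∀ l, (∑ i ∈ P l, ν i) = (∑ j ∈ Q l, μ j) := fun l => (hCRP l).1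
  -- Part 1: redundant edges
  have hred : redundantEdges ν μ E = E \ Finset.univ.biUnion El := by
    ext e
    simp only [redundantEdges, Finset.mem_filter, Finset.mem_sdiff, Finset.mem_biUnion,
      not_exists]
    constructor
    · rintro ⟨hE, hall⟩
      refine ⟨hE, fun l hl => ?_⟩
      obtain ⟨i0, j0⟩ := e
      obtain ⟨x', hx', hpos⟩ := nonredundant hμ hPdisj hPcov hQ hEl hCRP hx hl.2
      rw [hall x' hx'] at hpos
      exact lt_irrefl _ hpos
    · rintro ⟨hE, hnot⟩
      refine ⟨hE, fun y hy => ?_⟩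
      rcases (hy.1 e.1 e.2).eq_or_lt with h | h
      · exact h.symm
      · exfalso
        obtain ⟨l, h1, h2, h3⟩ := support_block hPdisj hPcov hQ hCRPsum hy h
        refine hnot l ⟨Finset.mem_univ l, ?_⟩
        rw [hEl l]
        refine Finset.mem_filter.mpr ⟨?_, h1, h2⟩
        simpa using h3
  refine ⟨hred, fun u v => ?_⟩
  have hsub : Finset.univ.biUnion El ⊆ E := by
    intro e he
    obtain ⟨l, -, hel⟩ := Finset.mem_biUnion.mp he
    rw [hEl l] at hel
    exact (Finset.mem_filter.mp hel).1
  have hgraph : E \ redundantEdges ν μ E = Finset.univ.biUnion El := by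
    rw [hred]
    ext e
    simp only [Finset.mem_sdiff, not_and, not_not]
    constructor
    · rintro ⟨he, hn⟩
      exact hn he
    · intro he
      exact ⟨hsub he, fun _ => he⟩
  rw [hgraph]
  constructor
  · intro h
    have hu : ∃ l, Sum.elim (fun i => i ∈ P l) (fun j => j ∈ Q l) u := by
      cases u with
      | inl i =>
        have hi : i ∈ Finset.univ.biUnion P := by rw [hPcov]; exact Finset.mem_univ i
        obtain ⟨l, -, hil⟩ := Finset.mem_biUnion.mp hi
        exact ⟨l, by simpa using hil⟩
      | inr j =>
        have hex : ∃ i, 0 < x i j := by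
          by_contra hc
          push_neg at hc
          have hzero : ∀ i, x i j = 0 := fun i => le_antisymm (hc i) (hx.1 i j)
          have := hx.2.2.1 j
          rw [Finset.sum_eq_zero fun i _ => hzero i] at this
          exact absurd this.symm (hμ j).ne'
        obtain ⟨i, hi⟩ := hex
        obtain ⟨l, -, hjl, -⟩ := support_block hPdisj hPcov hQ hCRPsum hx hi
        exact ⟨l, by simpa using hjl⟩
    obtain ⟨l, hul⟩ := hu
    exact ⟨l, hul, reachable_block hPdisj hQ hEl h hul⟩
  · rintro ⟨l, hu, hv⟩
    obtain ⟨i₀, hi₀⟩ := hPne l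
    exact ((block_connected hμ hPdisj hPcov hQ hEl hCRP hx hi₀ u hu).symm.trans
      (block_connected hμ hPdisj hPcov hQ hEl hCRP hx hi₀ v hv))
end
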